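/- Let D ⊆ 2^{<ω} be a prefix-free set of nonempty binary strings with Σ_{σ∈D} 2^{-|σ|} = 1 and AvgRT(D) = Σ_{σ∈D} |σ|·2^{-|σ|} < ∞. For σ ∈ 2^{<ω} let N_D(σ) be the largest k such that some initial segment of σ is a concatenation σ₁⌢⋯⌢σ_k of k elements of D. Then for λ-almost every X ∈ 2^ω, lim_{n→∞} N_D(X↾n)/n = 1/AvgRT(D). -/

import Mathlib

open Filter MeasureTheory

/-- The length-`n` initial segment of `X ∈ 2^ω`, as a finite binary string. -/
def seg (X : ℕ → Bool) (n : ℕ) : List Bool := (List.range n).map X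

/-- The cylinder `⟦σ⟧` of all sequences extending the string `σ`. -/
def cyl (σ : List Bool) : Set (ℕ → Bool) := {X | seg X σ.length = σ}

/-- `D ⊆ 2^{<ω}` is prefix-free: no element is a proper initial segment of another. -/
def PrefixFree (D : Set (List Bool)) : Prop :=
  ∀ σ ∈ D, ∀ τ ∈ D, σ <+: τ → σ = τ

/-- The average running time `AvgRT(D) = Σ_{σ∈D} |σ|·2^{-|σ|}` of the DDG-tree
with terminal set `D`. -/
noncomputable def AvgRT (D : Set (List Bool)) : ℝ :=
  ∑' σ : D, ((σ : List Bool).length : ℝ) * ((1 : ℝ) / 2) ^ (σ : List Bool).length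

/-- Some initial segment of `σ` is a concatenation of `k` elements of `D`. -/
def CatPrefix (D : Set (List Bool)) (k : ℕ) (σ : List Bool) : Prop :=
  ∃ B : Fin k → List Bool, (∀ i, B i ∈ D) ∧ (List.ofFn B).flatten <+: σ

/-!
Read `X` as a sequence of consecutive `D`-blocks. On the cylinder of `σ ∈ D` the rest of `X` is
again `λ`-distributed, since `λ(⟦σ⟧ ∩ shift_{|σ|}⁻¹ T) = 2^{-|σ|} λ(T)`; hence the length of the
first block is independent of what follows, the map dropping the first block preserves `λ`, and the
block lengths `L₀, L₁, …` are i.i.d. with mean `AvgRT(D)`. By the strong law of large numbers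
`(L₀ + ⋯ + L_{k-1}) / k → AvgRT(D)` almost surely. Prefix-freeness makes the parse unique, so
`N_D(X↾n)` is the number of blocks completed by time `n`, and inverting `k ↦ L₀ + ⋯ + L_{k-1}`
gives the limit.
-/

open ProbabilityTheory
open scoped ENNReal Topology

def shift (n : ℕ) (X : ℕ → Bool) : ℕ → Bool := fun i => X (n + i)

section CantorSpace

variable {X : ℕ → Bool} {σ τ : List Bool}

@[simp] lemma seg_length (X : ℕ → Bool) (n : ℕ) : (seg X n).length = n := by simp [seg]

lemma seg_add (X : ℕ → Bool) (n m : ℕ) : seg X (n + m) = seg X n ++ seg (shift n X) m := by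
  simp [seg, shift, List.range_add, Function.comp_def]

lemma seg_succ (X : ℕ → Bool) (n : ℕ) : seg X (n + 1) = seg X n ++ [X n] := by
  simp [seg, List.range_succ]

lemma seg_prefix_seg {m n : ℕ} (h : m ≤ n) : seg X m <+: seg X n := by
  obtain ⟨k, rfl⟩ := Nat.exists_eq_add_of_le h
  rw [seg_add]
  exact List.prefix_append _ _

lemma drop_seg {m n : ℕ} (h : m ≤ n) : (seg X n).drop m = seg (shift m X) (n - m) := by
  conv_lhs => rw [← Nat.add_sub_cancel' h, seg_add]
  simp

lemma mem_cyl : X ∈ cyl σ ↔ seg X σ.length = σ := Iff.rfl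

lemma prefix_seg_iff {n : ℕ} : σ <+: seg X n ↔ σ.length ≤ n ∧ X ∈ cyl σ := by
  refine ⟨fun h => ?_, fun ⟨hn, hX⟩ => hX ▸ seg_prefix_seg hn⟩
  have hn : σ.length ≤ n := by simpa using h.length_le
  refine ⟨hn, ((List.prefix_of_prefix_length_le (seg_prefix_seg hn) h (by simp)).eq_of_length
    (by simp))⟩

lemma prefix_or_prefix_of_mem_cyl (hσ : X ∈ cyl σ) (hτ : X ∈ cyl τ) : σ <+: τ ∨ τ <+: σ := by
  rw [mem_cyl] at hσ hτ
  rw [← hσ, ← hτ]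
  exact (le_total σ.length τ.length).imp seg_prefix_seg seg_prefix_seg

lemma PrefixFree.eq_of_mem_cyl {D : Set (List Bool)} (hpf : PrefixFree D) (hσD : σ ∈ D)
    (hτD : τ ∈ D) (hσ : X ∈ cyl σ) (hτ : X ∈ cyl τ) : σ = τ :=
  (prefix_or_prefix_of_mem_cyl hσ hτ).elim (hpf σ hσD τ hτD) fun h => (hpf τ hτD σ hσD h).symm

lemma cyl_append (σ τ : List Bool) : cyl (σ ++ τ) = cyl σ ∩ shift σ.length ⁻¹' cyl τ := by
  ext X
  simp only [Set.mem_inter_iff, Set.mem_preimage, mem_cyl, List.length_append, seg_add]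
  exact ⟨fun h => List.append_inj h (by simp), fun ⟨h₁, h₂⟩ => by rw [h₁, h₂]⟩

lemma cyl_nil : cyl [] = Set.univ := by ext; simp [mem_cyl, seg]

lemma cyl_singleton (b : Bool) : cyl [b] = {X | X 0 = b} := by ext; simp [mem_cyl, seg]

lemma setOf_apply_eq_iUnion_cyl (i : ℕ) (b : Bool) :
    {X : ℕ → Bool | X i = b} = ⋃ τ ∈ {τ : List Bool | τ.length = i}, cyl (τ ++ [b]) := by
  ext X
  simp only [Set.mem_ofPred_eq, Set.mem_iUnion, mem_cyl, List.length_append, List.length_singleton,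
    exists_prop]
  constructor
  · rintro rfl
    exact ⟨seg X i, seg_length X i, by rw [seg_length, seg_succ]⟩
  · rintro ⟨τ, rfl, h⟩
    rw [seg_succ] at h
    simpa using (List.append_inj h (by simp)).2

lemma measurable_shift (n : ℕ) : Measurable (shift n) :=
  measurable_pi_lambda _ fun i => measurable_pi_apply (n + i)

lemma measurableSet_cyl : ∀ σ : List Bool, MeasurableSet (cyl σ)
  | [] => cyl_nil ▸ MeasurableSet.univ
  | b :: σ => by
    rw [← List.singleton_append, cyl_append, cyl_singleton]
    exact (measurable_pi_apply 0 (measurableSet_singleton b)).inter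
      (measurable_shift 1 (measurableSet_cyl σ))

lemma cyl_subset_cyl (h : σ <+: τ) : cyl τ ⊆ cyl σ := by
  obtain ⟨ρ, rfl⟩ := h
  rw [cyl_append]
  exact Set.inter_subset_left

lemma isPiSystem_range_cyl : IsPiSystem (Set.range cyl) := by
  rintro _ ⟨σ, rfl⟩ _ ⟨τ, rfl⟩ ⟨X, hσ, hτ⟩
  rcases prefix_or_prefix_of_mem_cyl hσ hτ with h | h
  · exact ⟨τ, (Set.inter_eq_right.mpr (cyl_subset_cyl h)).symm⟩
  · exact ⟨σ, (Set.inter_eq_left.mpr (cyl_subset_cyl h)).symm⟩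

lemma generateFrom_range_cyl :
    MeasurableSpace.generateFrom (Set.range cyl) = MeasurableSpace.pi := by
  refine le_antisymm (MeasurableSpace.generateFrom_le fun _ ⟨σ, hσ⟩ => hσ ▸ measurableSet_cyl σ) ?_
  refine iSup_le fun i => Measurable.comap_le <| measurable_to_bool ?_
  rw [show (fun X : ℕ → Bool => X i) ⁻¹' {true} = {X | X i = true} from rfl,
    setOf_apply_eq_iUnion_cyl]
  exact .biUnion (Set.to_countable _) fun τ _ => .basic _ ⟨_, rfl⟩

end CantorSpace

lemma measure_cyl_inter_shift_preimage {lam : Measure (ℕ → Bool)} [IsProbabilityMeasure lam]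
    (hlam : ∀ σ : List Bool, lam (cyl σ) = (1 / 2 : ℝ≥0∞) ^ σ.length) (σ : List Bool)
    {T : Set (ℕ → Bool)} (hT : MeasurableSet T) :
    lam (cyl σ ∩ shift σ.length ⁻¹' T) = (1 / 2 : ℝ≥0∞) ^ σ.length * lam T := by
  have hmap : (lam.restrict (cyl σ)).map (shift σ.length) = ((1 / 2 : ℝ≥0∞) ^ σ.length) • lam := by
    refine ext_of_generate_finite _ generateFrom_range_cyl.symm isPiSystem_range_cyl ?_ ?_
    · rintro _ ⟨τ, rfl⟩
      rw [Measure.map_apply (measurable_shift _) (measurableSet_cyl τ),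
        Measure.restrict_apply' (measurableSet_cyl σ), Set.inter_comm, ← cyl_append, hlam,
        Measure.smul_apply, smul_eq_mul, hlam, List.length_append, pow_add]
    · rw [Measure.map_apply (measurable_shift _) .univ, Set.preimage_univ,
        Measure.restrict_apply_univ, hlam, Measure.smul_apply, smul_eq_mul, measure_univ, mul_one]
  have := congr($hmap T)
  rwa [Measure.map_apply (measurable_shift _) hT, Measure.restrict_apply' (measurableSet_cyl σ),
    Set.inter_comm, Measure.smul_apply, smul_eq_mul] at this

section Parsing

variable (D : Set (List Bool))

def prefixedBy : Set (ℕ → Bool) := {X | ∃ n, seg X n ∈ D}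

open Classical in
/-- The value `1` off `prefixedBy D` is junk; that set is `λ`-null (`measure_prefixedBy_compl`). -/
noncomputable def firstBlockLen (X : ℕ → Bool) : ℕ :=
  if h : X ∈ prefixedBy D then Nat.find h else 1

noncomputable def dropBlock (X : ℕ → Bool) : ℕ → Bool := shift (firstBlockLen D X) X

noncomputable def blockLen (k : ℕ) (X : ℕ → Bool) : ℕ := firstBlockLen D ((dropBlock D)^[k] X)

noncomputable def blockEnd (k : ℕ) (X : ℕ → Bool) : ℕ := ∑ i ∈ Finset.range k, blockLen D i X

def Parses (X : ℕ → Bool) : Prop := ∀ k, (dropBlock D)^[k] X ∈ prefixedBy D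

variable {D} {X : ℕ → Bool}

lemma seg_firstBlockLen_mem (hX : X ∈ prefixedBy D) : seg X (firstBlockLen D X) ∈ D := by
  classical
  rw [firstBlockLen, dif_pos hX]
  exact Nat.find_spec hX

lemma firstBlockLen_eq (hpf : PrefixFree D) {σ : List Bool} (hσ : σ ∈ D) (hX : X ∈ cyl σ) :
    firstBlockLen D X = σ.length := by
  have hXD : X ∈ prefixedBy D := ⟨σ.length, hX.symm ▸ hσ⟩
  have := hpf.eq_of_mem_cyl (seg_firstBlockLen_mem hXD) hσ (by simp [mem_cyl]) hX
  simpa using congr(List.length $this)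

lemma firstBlockLen_of_notMem (hX : X ∉ prefixedBy D) : firstBlockLen D X = 1 := by
  classical
  exact dif_neg hX

lemma blockLen_eq_comp (k : ℕ) : blockLen D k = firstBlockLen D ∘ (dropBlock D)^[k] := rfl

@[simp] lemma blockLen_zero : blockLen D 0 = firstBlockLen D := rfl

lemma blockLen_succ (k : ℕ) (X : ℕ → Bool) :
    blockLen D (k + 1) X = blockLen D k (dropBlock D X) := by
  simp only [blockLen, Function.iterate_succ_apply]

lemma blockEnd_succ (k : ℕ) (X : ℕ → Bool) :
    blockEnd D (k + 1) X = firstBlockLen D X + blockEnd D k (dropBlock D X) := by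
  simp only [blockEnd, Finset.sum_range_succ', blockLen_succ, blockLen_zero, add_comm]

lemma monotone_blockEnd (X : ℕ → Bool) : Monotone fun k => blockEnd D k X :=
  monotone_nat_of_le_succ fun k => by simp [blockEnd, Finset.sum_range_succ]

lemma Parses.dropBlock (h : Parses D X) : Parses D (dropBlock D X) := fun k => by
  simpa only [Function.iterate_succ_apply] using h (k + 1)

lemma catPrefix_zero (σ : List Bool) : CatPrefix D 0 σ :=
  ⟨Fin.elim0, fun i => i.elim0, by simp⟩

lemma catPrefix_succ_iff {k : ℕ} {σ : List Bool} :
    CatPrefix D (k + 1) σ ↔ ∃ τ ∈ D, τ <+: σ ∧ CatPrefix D k (σ.drop τ.length) := by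
  constructor
  · rintro ⟨B, hB, hpre⟩
    rw [List.ofFn_succ, List.flatten_cons] at hpre
    have hB0 : B 0 <+: σ := (List.prefix_append _ _).trans hpre
    refine ⟨B 0, hB 0, hB0, fun i => B i.succ, fun i => hB i.succ, ?_⟩
    rw [← List.prefix_iff_eq_append.mp hB0, List.prefix_append_right_inj] at hpre
    exact hpre
  · rintro ⟨τ, hτ, hτσ, B, hB, hpre⟩
    refine ⟨Fin.cons τ B, Fin.cases hτ hB, ?_⟩
    rw [List.ofFn_succ, List.flatten_cons, ← List.prefix_iff_eq_append.mp hτσ]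
    simpa [List.prefix_append_right_inj] using hpre

theorem catPrefix_seg_iff (hpf : PrefixFree D) (h : Parses D X) {k n : ℕ} :
    CatPrefix D k (seg X n) ↔ blockEnd D k X ≤ n := by
  induction k generalizing X n with
  | zero => simpa [blockEnd] using catPrefix_zero _
  | succ k ih =>
    have hfirst : seg X (firstBlockLen D X) ∈ D := seg_firstBlockLen_mem (h 0)
    rw [catPrefix_succ_iff, blockEnd_succ]
    constructor
    · rintro ⟨τ, hτD, hτ, hrest⟩
      obtain ⟨hτn, hXτ⟩ := prefix_seg_iff.mp hτ
      have hfl := firstBlockLen_eq hpf hτD hXτ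
      rw [drop_seg hτn, ← hfl] at hrest
      have := (ih h.dropBlock).mp hrest
      omega
    · intro hle
      refine ⟨_, hfirst, seg_prefix_seg (by omega), ?_⟩
      rw [seg_length, drop_seg (by omega)]
      exact (ih h.dropBlock).mpr (by omega)

lemma PrefixFree.pairwise_disjoint_cyl (hpf : PrefixFree D) :
    Pairwise fun σ τ : D => Disjoint (cyl σ.1) (cyl τ.1) := fun σ τ hne =>
  Set.disjoint_left.mpr fun _ hσ hτ => hne (Subtype.ext (hpf.eq_of_mem_cyl σ.2 τ.2 hσ hτ))

lemma prefixedBy_eq_iUnion : prefixedBy D = ⋃ σ : D, cyl σ.1 := by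
  ext X
  simp only [prefixedBy, Set.mem_ofPred_eq, Set.mem_iUnion, mem_cyl, Subtype.exists, exists_prop]
  exact ⟨fun ⟨n, h⟩ => ⟨_, h, by rw [seg_length]⟩, fun ⟨σ, hσ, hX⟩ => ⟨σ.length, by rwa [hX]⟩⟩

lemma firstBlockLen_preimage_inter_dropBlock_preimage_inter_cyl (hpf : PrefixFree D) (s : Set ℕ)
    (t : Set (ℕ → Bool)) (σ : D) :
    firstBlockLen D ⁻¹' s ∩ dropBlock D ⁻¹' t ∩ cyl σ.1 =
      {_X | σ.1.length ∈ s} ∩ (cyl σ.1 ∩ shift σ.1.length ⁻¹' t) := by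
  ext X
  by_cases hX : X ∈ cyl σ.1
  · simp [dropBlock, firstBlockLen_eq hpf σ.2 hX, hX]
  · simp [hX]

end Parsing

section Measurability

variable {D : Set (List Bool)}

lemma setOf_seg_mem_eq (n : ℕ) :
    {X : ℕ → Bool | seg X n ∈ D} = ⋃ σ ∈ {σ ∈ D | σ.length = n}, cyl σ := by
  ext X
  simp only [Set.mem_ofPred_eq, Set.mem_iUnion, mem_cyl, exists_prop]
  constructor
  · exact fun h => ⟨seg X n, ⟨h, seg_length X n⟩, by rw [seg_length]⟩
  · rintro ⟨σ, ⟨hσ, rfl⟩, hX⟩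
    rwa [hX]

lemma measurableSet_setOf_seg_mem (n : ℕ) : MeasurableSet {X : ℕ → Bool | seg X n ∈ D} := by
  rw [setOf_seg_mem_eq]
  exact .biUnion (Set.to_countable _) fun σ _ => measurableSet_cyl σ

lemma measurableSet_prefixedBy : MeasurableSet (prefixedBy D) := by
  rw [show prefixedBy D = ⋃ n, {X | seg X n ∈ D} by ext; simp [prefixedBy]]
  exact .iUnion measurableSet_setOf_seg_mem

lemma firstBlockLen_preimage_singleton_inter (hpf : PrefixFree D) (n : ℕ) :
    firstBlockLen D ⁻¹' {n} ∩ prefixedBy D = {X | seg X n ∈ D} := by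
  ext X
  simp only [Set.mem_inter_iff, Set.mem_preimage, Set.mem_singleton_iff, Set.mem_ofPred_eq]
  constructor
  · rintro ⟨rfl, hX⟩
    exact seg_firstBlockLen_mem hX
  · intro h
    exact ⟨by simpa using firstBlockLen_eq hpf h (by simp [mem_cyl]), ⟨n, h⟩⟩

lemma measurable_firstBlockLen (hpf : PrefixFree D) : Measurable (firstBlockLen D) := by
  refine measurable_to_countable' fun n => ?_
  rw [← Set.inter_union_compl (firstBlockLen D ⁻¹' {n}) (prefixedBy D),
    firstBlockLen_preimage_singleton_inter hpf]
  have hcompl : firstBlockLen D ⁻¹' {n} ∩ (prefixedBy D)ᶜ = {_X | 1 = n} ∩ (prefixedBy D)ᶜ := by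
    ext X
    simp +contextual [firstBlockLen_of_notMem]
  rw [hcompl]
  exact (measurableSet_setOf_seg_mem n).union
    ((MeasurableSet.const _).inter measurableSet_prefixedBy.compl)

lemma measurable_dropBlock (hpf : PrefixFree D) : Measurable (dropBlock D) :=
  (measurable_from_prod_countable_left (f := fun p : (ℕ → Bool) × ℕ => shift p.2 p.1)
    fun n => measurable_shift n).comp (measurable_id.prodMk (measurable_firstBlockLen hpf))

lemma measurable_blockLen (hpf : PrefixFree D) (k : ℕ) : Measurable (blockLen D k) :=
  (measurable_firstBlockLen hpf).comp ((measurable_dropBlock hpf).iterate k)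

end Measurability

theorem ProbabilityTheory.IndepFun.comp_measurePreserving {Ω Ω' β γ : Type*}
    [MeasurableSpace Ω] [MeasurableSpace Ω'] [MeasurableSpace β] [MeasurableSpace γ]
    {μ : Measure Ω} {μ' : Measure Ω'} {f : Ω → β} {g : Ω → γ} (hfg : f ⟂ᵢ[μ] g)
    (hf : Measurable f) (hg : Measurable g) {T : Ω' → Ω} (hT : MeasurePreserving T μ' μ) :
    (f ∘ T) ⟂ᵢ[μ'] (g ∘ T) := by
  rw [indepFun_iff_measure_inter_preimage_eq_mul] at hfg ⊢
  intro s t hs ht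
  simp only [Set.preimage_comp, ← Set.preimage_inter]
  rw [hT.measure_preimage ((hf hs).inter (hg ht)).nullMeasurableSet,
    hT.measure_preimage (hf hs).nullMeasurableSet, hT.measure_preimage (hg ht).nullMeasurableSet]
  exact hfg s t hs ht

section BlockLaw

variable (D : Set (List Bool))

noncomputable def blockLaw : Measure ℕ :=
  Measure.sum fun σ : D => ((1 / 2 : ℝ≥0∞) ^ σ.1.length) • Measure.dirac σ.1.length

variable {D}

lemma blockLaw_apply (s : Set ℕ) :
    blockLaw D s = ∑' σ : D, (1 / 2 : ℝ≥0∞) ^ σ.1.length * s.indicator 1 σ.1.length := by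
  simp [blockLaw, Measure.sum_apply _ (MeasurableSet.of_discrete (s := s))]

lemma blockLaw_univ (hD : ∑' σ : D, (1 / 2 : ℝ≥0∞) ^ σ.1.length = 1) : blockLaw D .univ = 1 := by
  simpa [blockLaw_apply] using hD

lemma lintegral_blockLaw :
    ∫⁻ n, (n : ℝ≥0∞) ∂blockLaw D = ∑' σ : D, (1 / 2 : ℝ≥0∞) ^ σ.1.length * σ.1.length := by
  simp [blockLaw, lintegral_sum_measure]

end BlockLaw

section AvgRT

variable {D : Set (List Bool)}

lemma summable_of_tsum_eq_one {ι : Type*} {f : ι → ℝ} (h : ∑' i, f i = 1) : Summable f := by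
  by_contra hf
  simp [tsum_eq_zero_of_not_summable hf] at h

lemma ENNReal.ofReal_half_pow (n : ℕ) :
    ENNReal.ofReal ((1 / 2 : ℝ) ^ n) = (1 / 2 : ℝ≥0∞) ^ n := by
  rw [ENNReal.ofReal_pow (by norm_num), ENNReal.ofReal_div_of_pos two_pos]
  simp

lemma tsum_half_pow_length_eq_one (hsum : ∑' σ : D, (1 / 2 : ℝ) ^ σ.1.length = 1) :
    ∑' σ : D, (1 / 2 : ℝ≥0∞) ^ σ.1.length = 1 := by
  simp_rw [← ENNReal.ofReal_half_pow, ← ENNReal.ofReal_tsum_of_nonneg (fun _ => by positivity)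
    (summable_of_tsum_eq_one hsum), hsum, ENNReal.ofReal_one]

lemma ofReal_avgRT (hfin : Summable fun σ : D => (σ.1.length : ℝ) * (1 / 2 : ℝ) ^ σ.1.length) :
    ENNReal.ofReal (AvgRT D) = ∑' σ : D, (1 / 2 : ℝ≥0∞) ^ σ.1.length * σ.1.length := by
  rw [AvgRT, ENNReal.ofReal_tsum_of_nonneg (fun _ => by positivity) hfin]
  refine tsum_congr fun σ => ?_
  rw [ENNReal.ofReal_mul (by positivity), ENNReal.ofReal_natCast, ENNReal.ofReal_half_pow, mul_comm]

lemma avgRT_nonneg : 0 ≤ AvgRT D := tsum_nonneg fun _ => by positivity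

lemma one_le_avgRT (hne : ∀ σ ∈ D, σ ≠ ([] : List Bool))
    (hsum : ∑' σ : D, (1 / 2 : ℝ) ^ σ.1.length = 1)
    (hfin : Summable fun σ : D => (σ.1.length : ℝ) * (1 / 2 : ℝ) ^ σ.1.length) :
    1 ≤ AvgRT D := by
  rw [← hsum, AvgRT]
  refine (summable_of_tsum_eq_one hsum).tsum_le_tsum (fun σ => ?_) hfin
  refine le_mul_of_one_le_left (by positivity) ?_
  exact_mod_cast List.length_pos_iff.mpr (hne _ σ.2)

end AvgRT

section Regeneration

variable {D : Set (List Bool)} {lam : Measure (ℕ → Bool)} [IsProbabilityMeasure lam]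
  (hpf : PrefixFree D)
  (hlam : ∀ σ : List Bool, lam (cyl σ) = (1 / 2 : ℝ≥0∞) ^ σ.length)
  (hD : ∑' σ : D, (1 / 2 : ℝ≥0∞) ^ σ.1.length = 1)
include hpf hlam hD

lemma measure_prefixedBy_compl : lam (prefixedBy D)ᶜ = 0 := by
  rw [prefixedBy_eq_iUnion,
    measure_compl (.iUnion fun σ => measurableSet_cyl _) (measure_ne_top _ _),
    measure_iUnion hpf.pairwise_disjoint_cyl fun σ => measurableSet_cyl _, measure_univ]
  simp only [hlam, hD, tsub_self]

theorem measure_firstBlockLen_preimage_inter_dropBlock_preimage (s : Set ℕ) {t : Set (ℕ → Bool)}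
    (ht : MeasurableSet t) :
    lam (firstBlockLen D ⁻¹' s ∩ dropBlock D ⁻¹' t) = blockLaw D s * lam t := by
  set E := firstBlockLen D ⁻¹' s ∩ dropBlock D ⁻¹' t
  have hpiece := firstBlockLen_preimage_inter_dropBlock_preimage_inter_cyl hpf s t
  calc lam E = lam (E ∩ prefixedBy D) :=
        (measure_inter_conull (measure_prefixedBy_compl hpf hlam hD)).symm
    _ = ∑' σ : D, lam (E ∩ cyl σ.1) := by
        rw [prefixedBy_eq_iUnion, Set.inter_iUnion]
        refine measure_iUnion (fun σ τ hne => ?_) fun σ => ?_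
        · exact (hpf.pairwise_disjoint_cyl hne).mono Set.inter_subset_right Set.inter_subset_right
        · rw [hpiece]
          exact (MeasurableSet.const _).inter ((measurableSet_cyl _).inter (measurable_shift _ ht))
    _ = ∑' σ : D, (1 / 2 : ℝ≥0∞) ^ σ.1.length * s.indicator 1 σ.1.length * lam t := by
        refine tsum_congr fun σ => ?_
        rw [hpiece]
        by_cases hσ : σ.1.length ∈ s
        · simp [hσ, measure_cyl_inter_shift_preimage hlam σ.1 ht]
        · simp [hσ]
    _ = blockLaw D s * lam t := by rw [ENNReal.tsum_mul_right, blockLaw_apply]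

lemma map_firstBlockLen : lam.map (firstBlockLen D) = blockLaw D := by
  ext s hs
  rw [Measure.map_apply (measurable_firstBlockLen hpf) hs]
  simpa using measure_firstBlockLen_preimage_inter_dropBlock_preimage hpf hlam hD s .univ

lemma measurePreserving_dropBlock : MeasurePreserving (dropBlock D) lam lam := by
  refine ⟨measurable_dropBlock hpf, Measure.ext fun t ht => ?_⟩
  rw [Measure.map_apply (measurable_dropBlock hpf) ht]
  simpa [blockLaw_univ hD] using
    measure_firstBlockLen_preimage_inter_dropBlock_preimage hpf hlam hD .univ ht

lemma indepFun_firstBlockLen_dropBlock : firstBlockLen D ⟂ᵢ[lam] dropBlock D := by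
  rw [indepFun_iff_measure_inter_preimage_eq_mul]
  intro s t _ ht
  rw [measure_firstBlockLen_preimage_inter_dropBlock_preimage hpf hlam hD s ht,
    (measurePreserving_dropBlock hpf hlam hD).measure_preimage ht.nullMeasurableSet,
    ← Measure.map_apply (measurable_firstBlockLen hpf) .of_discrete,
    map_firstBlockLen hpf hlam hD]

lemma indepFun_blockLen {i j : ℕ} (hij : i < j) :
    blockLen D i ⟂ᵢ[lam] blockLen D j := by
  have h := ((indepFun_firstBlockLen_dropBlock hpf hlam hD).comp measurable_id
    (measurable_blockLen hpf (j - i - 1))).comp_measurePreserving (measurable_firstBlockLen hpf)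
    ((measurable_blockLen hpf _).comp (measurable_dropBlock hpf))
    ((measurePreserving_dropBlock hpf hlam hD).iterate i)
  have hj : blockLen D j = (blockLen D (j - i - 1) ∘ dropBlock D) ∘ (dropBlock D)^[i] := by
    funext X
    simp only [Function.comp_apply, blockLen, ← Function.iterate_succ_apply,
      ← Function.iterate_add_apply]
    congr 2
    omega
  rw [hj]
  exact h

lemma identDistrib_blockLen (k : ℕ) :
    IdentDistrib (blockLen D k) (blockLen D 0) lam lam where
  aemeasurable_fst := (measurable_blockLen hpf k).aemeasurable
  aemeasurable_snd := (measurable_blockLen hpf 0).aemeasurable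
  map_eq := by
    rw [blockLen_zero, blockLen_eq_comp, ← Measure.map_map (measurable_firstBlockLen hpf)
      ((measurable_dropBlock hpf).iterate k),
      ((measurePreserving_dropBlock hpf hlam hD).iterate k).map_eq]

lemma ae_parses : ∀ᵐ X ∂lam, Parses D X :=
  ae_all_iff.mpr fun k =>
    ((measurePreserving_dropBlock hpf hlam hD).iterate k).quasiMeasurePreserving.ae
      (measure_prefixedBy_compl hpf hlam hD)

lemma lintegral_firstBlockLen
    (hfin : Summable fun σ : D => (σ.1.length : ℝ) * (1 / 2 : ℝ) ^ σ.1.length) :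
    ∫⁻ X, (firstBlockLen D X : ℝ≥0∞) ∂lam = ENNReal.ofReal (AvgRT D) := by
  rw [← lintegral_map measurable_from_top (measurable_firstBlockLen hpf),
    map_firstBlockLen hpf hlam hD, lintegral_blockLaw, ofReal_avgRT hfin]

lemma integrable_firstBlockLen
    (hfin : Summable fun σ : D => (σ.1.length : ℝ) * (1 / 2 : ℝ) ^ σ.1.length) :
    Integrable (fun X => (firstBlockLen D X : ℝ)) lam := by
  simpa using integrable_toReal_of_lintegral_ne_top
    (measurable_from_top.comp (measurable_firstBlockLen hpf)).aemeasurable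
    ((lintegral_firstBlockLen hpf hlam hD hfin).trans_ne ENNReal.ofReal_ne_top)

lemma integral_firstBlockLen
    (hfin : Summable fun σ : D => (σ.1.length : ℝ) * (1 / 2 : ℝ) ^ σ.1.length) :
    ∫ X, (firstBlockLen D X : ℝ) ∂lam = AvgRT D := by
  simpa [lintegral_firstBlockLen hpf hlam hD hfin, ENNReal.toReal_ofReal avgRT_nonneg] using
    integral_toReal (μ := lam)
      (measurable_from_top.comp (measurable_firstBlockLen hpf)).aemeasurable
      (ae_of_all _ fun _ => ENNReal.natCast_lt_top _)

theorem ae_tendsto_blockEnd_div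
    (hfin : Summable fun σ : D => (σ.1.length : ℝ) * (1 / 2 : ℝ) ^ σ.1.length) :
    ∀ᵐ X ∂lam, Tendsto (fun k : ℕ => (blockEnd D k X : ℝ) / k) atTop (𝓝 (AvgRT D)) := by
  have hindep : Pairwise fun i j =>
      (fun X => (blockLen D i X : ℝ)) ⟂ᵢ[lam] fun X => (blockLen D j X : ℝ) := by
    intro i j hij
    rcases hij.lt_or_gt with h | h
    · exact (indepFun_blockLen hpf hlam hD h).comp measurable_from_top measurable_from_top
    · exact ((indepFun_blockLen hpf hlam hD h).comp measurable_from_top measurable_from_top).symm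
  filter_upwards [strong_law_ae_real (fun k X => (blockLen D k X : ℝ))
    (integrable_firstBlockLen hpf hlam hD hfin) hindep
    fun k => (identDistrib_blockLen hpf hlam hD k).comp measurable_from_top] with X hX
  simpa [blockEnd, integral_firstBlockLen hpf hlam hD hfin] using hX

end Regeneration

theorem tendsto_counting_div_atTop {S N : ℕ → ℕ} {m : ℝ} (hm : 0 < m) (hS_mono : Monotone S)
    (hS : Tendsto (fun k => (S k : ℝ) / k) atTop (𝓝 m))
    (hle : ∀ n, S (N n) ≤ n) (hlt : ∀ n, n < S (N n + 1)) :
    Tendsto (fun n => (N n : ℝ) / n) atTop (𝓝 (1 / m)) := by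
  have hN : Tendsto N atTop atTop := tendsto_atTop.mpr fun b =>
    (eventually_ge_atTop (S b)).mono fun n hn => by
      by_contra! hb
      exact (hlt n).not_ge ((hS_mono hb).trans hn)
  have hinv : Tendsto (fun k : ℕ => (k : ℝ) / S k) atTop (𝓝 (1 / m)) := by
    simpa only [inv_div, one_div] using hS.inv₀ hm.ne'
  have hinv_succ : Tendsto (fun k : ℕ => (k : ℝ) / S (k + 1)) atTop (𝓝 (1 / m)) := by
    have := (tendsto_natCast_div_add_atTop (1 : ℝ)).mul (hinv.comp (tendsto_add_atTop_nat 1))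
    rw [one_mul] at this
    refine this.congr fun k => ?_
    simp only [Function.comp_apply, Nat.cast_add, Nat.cast_one]
    rw [div_mul_div_comm, mul_comm ((k : ℝ) + 1), mul_div_mul_right _ _ (by positivity)]
  have hS_pos : ∀ᶠ k in atTop, 0 < (S k : ℝ) :=
    ((hS.eventually (lt_mem_nhds hm)).and (eventually_gt_atTop 0)).mono fun k ⟨h, hk⟩ =>
      (div_pos_iff_of_pos_right (by exact_mod_cast hk)).mp h
  refine tendsto_of_tendsto_of_tendsto_of_le_of_le' (hinv_succ.comp hN) (hinv.comp hN) ?_ ?_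
  · filter_upwards [eventually_gt_atTop 0] with n hn
    have : (n : ℝ) < S (N n + 1) := by exact_mod_cast hlt n
    exact div_le_div_of_nonneg_left (by positivity) (by positivity) this.le
  · filter_upwards [hN.eventually hS_pos] with n hn
    exact div_le_div_of_nonneg_left (by positivity) hn (by exact_mod_cast hle n)

/-- Let `D` be a prefix-free set of nonempty strings with `Σ_{σ∈D} 2^{-|σ|} = 1`
and finite `AvgRT(D)`, and let `N σ` be the largest `k` such that some initial
segment of `σ` is a concatenation of `k` elements of `D`.  Then for `λ`-a.e.
`X ∈ 2^ω`, `N(X↾n)/n → 1/AvgRT(D)`. -/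
theorem stmt14 (D : Set (List Bool))
    (hne : ∀ σ ∈ D, σ ≠ ([] : List Bool))
    (hpf : PrefixFree D)
    (hsum : ∑' σ : D, ((1 : ℝ) / 2) ^ (σ : List Bool).length = 1)
    (hfin : Summable (fun σ : D =>
      ((σ : List Bool).length : ℝ) * ((1 : ℝ) / 2) ^ (σ : List Bool).length))
    (N : List Bool → ℕ)
    (hN : ∀ σ : List Bool, CatPrefix D (N σ) σ ∧ ∀ k, CatPrefix D k σ → k ≤ N σ)
    (lam : Measure (ℕ → Bool)) [IsProbabilityMeasure lam]
    (hlam : ∀ σ : List Bool, lam (cyl σ) = (1 / 2 : ENNReal) ^ σ.length) :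
    ∀ᵐ X ∂lam,
      Tendsto (fun n : ℕ => ((N (seg X n) : ℝ)) / n) atTop
        (nhds (1 / AvgRT D)) := by
  have hD := tsum_half_pow_length_eq_one hsum
  have hAvg : 0 < AvgRT D := one_pos.trans_le (one_le_avgRT hne hsum hfin)
  filter_upwards [ae_tendsto_blockEnd_div hpf hlam hD hfin, ae_parses hpf hlam hD]
    with X hX hparse
  have hcat (k n : ℕ) := catPrefix_seg_iff (k := k) (n := n) hpf hparse
  refine tendsto_counting_div_atTop hAvg (monotone_blockEnd X) hX
    (fun n => (hcat _ _).mp (hN _).1) fun n => ?_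
  by_contra! h
  exact (Nat.lt_succ_self _).not_ge ((hN _).2 _ ((hcat _ _).mpr h))
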